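/- arXiv:0905.1823 — 3 statements merged into one kernel-verified Lean document; each statement's English description precedes it below -/
import Mathlib

section
/- Let g̃ = δᵏ ∘ g be an element of the universal covering group of PSL(2,R) acting on R ≅ R̃P¹, where δ is the generating central translation (with δx > x for all x), k ≥ 1, and g has a fixed point in R. Then g̃ acts freely and properly discontinuously on R. -/
/-!
Write `f = δᵏ g`. Since `δ` is a fixed-point-free homeomorphism, the `δ`-orbit of a fixed
point `x₀` of `g` is unbounded in both directions (a bounded monotone orbit would converge to a
fixed point of `δ`), so every `x` lies in some fundamental domain `[δᵐ x₀, δᵐ⁺¹ x₀)`.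
The endpoints are again fixed by `g`, hence `g x ≥ δᵐ x₀` and `δ (g x) ≥ δᵐ⁺¹ x₀ > x`, so
`x < f x` everywhere. An increasing map without fixed points acts like a translation: its nonzero
powers have no fixed points, and an interval `(f⁻¹ b, b)` with `x < b < f x` is moved off itself
by every nonzero power.
-/

open Function

section UnboundedOrbit

variable {α : Type*} [ConditionallyCompleteLinearOrder α] [TopologicalSpace α] [OrderTopology α]
  {f : α → α}

theorem exists_lt_iterate_of_forall_lt (hf : Continuous f) (hlt : ∀ x, x < f x) (x y : α) :
    ∃ n : ℕ, y < f^[n] x := by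
  by_contra! h
  have hmono : Monotone fun n => f^[n] x :=
    fun _ _ hmn => monotone_iterate_of_id_le (fun z => (hlt z).le) hmn x
  exact (hlt _).ne' <| isFixedPt_of_tendsto_iterate
    (tendsto_atTop_ciSup hmono ⟨y, Set.forall_mem_range.2 h⟩) hf.continuousAt

theorem exists_iterate_lt_of_forall_lt (hf : Continuous f) (hlt : ∀ x, f x < x) (x y : α) :
    ∃ n : ℕ, f^[n] x < y :=
  exists_lt_iterate_of_forall_lt (α := αᵒᵈ) hf hlt x y

end UnboundedOrbit

namespace Equiv.Perm

variable {α : Type*}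

section LinearOrder

variable [LinearOrder α] {f : Perm α}

theorem le_pow_apply (h : ∀ x, x ≤ f x) (n : ℕ) (x : α) : x ≤ (f ^ n) x :=
  id_le_iterate_of_id_le h n x

theorem lt_pow_apply (h : ∀ x, x < f x) {n : ℕ} (hn : n ≠ 0) (x : α) : x < (f ^ n) x := by
  obtain ⟨m, rfl⟩ := Nat.exists_eq_succ_of_ne_zero hn
  rw [pow_succ, mul_apply]
  exact (h x).trans_le (le_pow_apply (fun y => (h y).le) m (f x))

theorem zpow_apply_ne_self (h : ∀ x, x < f x) {n : ℤ} (hn : n ≠ 0) (x : α) :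
    (f ^ n) x ≠ x := by
  obtain ⟨m, rfl | rfl⟩ := Int.eq_nat_or_neg n
  · rw [zpow_natCast]
    exact (lt_pow_apply h (by simpa using hn) x).ne'
  · rw [zpow_neg, zpow_natCast, Ne, inv_eq_iff_eq]
    exact (lt_pow_apply h (by simpa using hn) x).ne

theorem strictMono_zpow_apply (h : ∀ x, x < f x) (x : α) :
    StrictMono fun n : ℤ => (f ^ n) x :=
  strictMono_int_of_lt_succ fun n => by
    rw [add_comm, zpow_one_add, mul_apply]
    exact h _

theorem exists_isOpen_disjoint_zpow_image [DenselyOrdered α] [TopologicalSpace α]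
    [OrderTopology α] (hf : StrictMono f) (h : ∀ x, x < f x) (x : α) :
    ∃ U : Set α, IsOpen U ∧ x ∈ U ∧
      ∀ n : ℤ, n ≠ 0 → _root_.Disjoint ((fun y => (f ^ n) y) '' U) U := by
  obtain ⟨b, hxb, hbf⟩ := exists_between (h x)
  have hfb : f (f⁻¹ b) = b := f.apply_symm_apply b
  have hmem : x ∈ Set.Ioo (f⁻¹ b) b := ⟨hf.lt_iff_lt.1 (by rwa [hfb]), hxb⟩
  have hout : ∀ m : ℕ, m ≠ 0 → ∀ y ∈ Set.Ioo (f⁻¹ b) b, (f ^ m) y ∉ Set.Ioo (f⁻¹ b) b := by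
    intro m hm y hy hmy
    obtain ⟨j, rfl⟩ := Nat.exists_eq_succ_of_ne_zero hm
    rw [pow_succ, mul_apply] at hmy
    have hby : b < f y := hfb ▸ hf hy.1
    exact hmy.2.not_ge (hby.trans_le (le_pow_apply (fun z => (h z).le) j (f y))).le
  refine ⟨_, isOpen_Ioo, hmem, fun n hn => Set.disjoint_left.2 ?_⟩
  rintro _ ⟨y, hy, rfl⟩ hz
  obtain ⟨m, rfl | rfl⟩ := Int.eq_nat_or_neg n
  · rw [zpow_natCast] at hz
    exact hout m (by simpa using hn) y hy hz
  · have hback : (f ^ m) ((f ^ (-(m : ℤ))) y) = y := by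
      rw [zpow_neg, zpow_natCast]
      exact (f ^ m).apply_symm_apply y
    exact hout m (by simpa using hn) _ hz (by rwa [hback])

end LinearOrder

section Topology

variable [ConditionallyCompleteLinearOrder α] [TopologicalSpace α] [OrderTopology α]

theorem exists_zpow_apply_le_lt {f : Perm α} (hf : Continuous f) (hf' : Continuous ⇑f⁻¹)
    (h : ∀ x, x < f x) (x₀ x : α) : ∃ m : ℤ, (f ^ m) x₀ ≤ x ∧ x < (f ^ (m + 1)) x₀ := by
  have hmono := strictMono_zpow_apply h x₀
  obtain ⟨N, hN⟩ := exists_lt_iterate_of_forall_lt hf h x₀ x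
  obtain ⟨M, hM⟩ := exists_iterate_lt_of_forall_lt hf'
    (fun y => by simpa using h (f⁻¹ y)) x₀ x
  have hN' : x < (f ^ (N : ℤ)) x₀ := by rw [zpow_natCast]; exact hN
  have hM' : (f ^ (-(M : ℤ))) x₀ ≤ x := by rw [zpow_neg, zpow_natCast, ← inv_pow]; exact hM.le
  obtain ⟨m, hm, hmax⟩ := Int.exists_greatest_of_bdd (P := fun m => (f ^ m) x₀ ≤ x)
    ⟨N, fun m hm => (hmono.lt_iff_lt.1 (hm.trans_lt hN')).le⟩ ⟨_, hM'⟩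
  exact ⟨m, hm, not_le.1 fun hle => by have := hmax _ hle; omega⟩

theorem lt_apply_apply_of_commute {δ g : Perm α} (hδ : Continuous δ) (hδ' : Continuous ⇑δ⁻¹)
    (hδmono : Monotone δ) (hlt : ∀ x, x < δ x) (hg : Monotone g) (hcomm : Commute g δ)
    {x₀ : α} (hx₀ : g x₀ = x₀) (x : α) : x < δ (g x) := by
  obtain ⟨m, hm, hxm⟩ := exists_zpow_apply_le_lt hδ hδ' hlt x₀ x
  have hfix : g ((δ ^ m) x₀) = (δ ^ m) x₀ := by
    rw [← mul_apply, (hcomm.zpow_right m).eq, mul_apply, hx₀]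
  calc x < (δ ^ (m + 1)) x₀ := hxm
    _ = δ ((δ ^ m) x₀) := by rw [add_comm, zpow_one_add, mul_apply]
    _ ≤ δ (g x) := hδmono (hfix ▸ hg hm)

theorem lt_pow_mul_apply_of_commute {δ g : Perm α} (hδ : Continuous δ)
    (hδ' : Continuous ⇑δ⁻¹) (hδmono : Monotone δ) (hlt : ∀ x, x < δ x) (hg : Monotone g)
    (hcomm : Commute g δ) {x₀ : α} (hx₀ : g x₀ = x₀) {k : ℕ} (hk : k ≠ 0) (x : α) :
    x < (δ ^ k * g) x := by
  obtain ⟨j, rfl⟩ := Nat.exists_eq_succ_of_ne_zero hk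
  rw [pow_succ, mul_apply, mul_apply]
  exact (lt_apply_apply_of_commute hδ hδ' hδmono hlt hg hcomm hx₀ x).trans_le
    (le_pow_apply (fun y => (hlt y).le) j _)

end Topology

end Equiv.Perm

/-- Let `δ` be the central deck translation of the universal cover `ℝ` of
`ℝP¹` (increasing, fixed-point free) and `g` an increasing homeomorphism
commuting with `δ` and having a fixed point.  For `k ≥ 1` the element
`g̃ = δᵏ ∘ g` acts freely and properly discontinuously on `ℝ`. -/
theorem stmt7 (δ g : ℝ ≃ₜ ℝ) (k : ℕ) (hk : 1 ≤ k)
    (hδmono : StrictMono δ) (hδ : ∀ x : ℝ, x < δ x)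
    (hgmono : StrictMono g)
    (hcomm : ∀ x : ℝ, g (δ x) = δ (g x))
    (hfix : ∃ x : ℝ, g x = x) :
    (∀ n : ℤ, n ≠ 0 → ∀ x : ℝ, ((δ.toEquiv ^ k * g.toEquiv) ^ n) x ≠ x) ∧
    (∀ x : ℝ, ∃ U : Set ℝ, IsOpen U ∧ x ∈ U ∧
      ∀ n : ℤ, n ≠ 0 →
        Disjoint ((fun y => ((δ.toEquiv ^ k * g.toEquiv) ^ n) y) '' U) U) := by
  obtain ⟨x₀, hx₀⟩ := hfix
  have hlt : ∀ x, x < (δ.toEquiv ^ k * g.toEquiv) x :=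
    Equiv.Perm.lt_pow_mul_apply_of_commute δ.continuous δ.symm.continuous hδmono.monotone hδ
      hgmono.monotone (Equiv.ext hcomm) hx₀ (by omega)
  have hmono : StrictMono (δ.toEquiv ^ k * g.toEquiv) := (hδmono.iterate k).comp hgmono
  exact ⟨fun n hn x => Equiv.Perm.zpow_apply_ne_self hlt hn x,
    Equiv.Perm.exists_isOpen_disjoint_zpow_image hmono hlt⟩
end

section
/- Every real projective structure on the circle arises as a quotient I/⟨ρ(1)⟩ where the developing map d : R → R̃P¹ is a homeomorphism onto an open interval I, and ρ(1) ∈ G̃ is a nontrivial element preserving I and acting freely and properly discontinuously on I. -/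
/-! A local homeomorphism `ℝ → ℝ` is an open map, so it has no local extremum; by the
topological Rolle theorem it can therefore take no value twice. Being injective and open,
the developing map is an open embedding onto an interval, on which the holonomy acts as
translation by `1` does on `ℝ`: freely, and with the image of any interval of length `1`
as a wandering neighbourhood. -/

open Function Set Topology

section OpenMap

variable {X Y : Type*} [TopologicalSpace X] [LinearOrder Y] [TopologicalSpace Y] [OrderTopology Y]
  [DenselyOrdered Y] [NoMinOrder Y] [NoMaxOrder Y] {f : X → Y}

theorem IsOpenMap.not_isLocalExtr (hf : IsOpenMap f) (x : X) : ¬IsLocalExtr f x := fun hx =>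
  (hx.on univ).not_nhds_le_map (by rw [nhdsWithin_univ]; exact hf.nhds_le x)

theorem IsOpenMap.injective_of_continuous [ConditionallyCompleteLinearOrder X] [DenselyOrdered X]
    [OrderTopology X] (hf : IsOpenMap f) (hcont : Continuous f) : Injective f := fun a b hab => by
  by_contra hne
  obtain ⟨c, -, hc⟩ := exists_isLocalExtr_uIoo hne hcont.continuousOn hab
  exact hf.not_isLocalExtr c hc

end OpenMap

theorem Function.Semiconj.perm_zpow {α β : Type*} {f : α → β} {ea : Equiv.Perm α}
    {eb : Equiv.Perm β} (h : Semiconj f ea eb) (n : ℤ) : Semiconj f ⇑(ea ^ n) ⇑(eb ^ n) := by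
  induction n using Int.induction_on with
  | zero => exact Semiconj.id_right
  | succ n ih =>
    rw [zpow_add_one, zpow_add_one, Equiv.Perm.coe_mul, Equiv.Perm.coe_mul]
    exact ih.comp_right h
  | pred n ih =>
    rw [zpow_sub_one, zpow_sub_one, Equiv.Perm.coe_mul, Equiv.Perm.coe_mul]
    exact ih.comp_right (h.inverses_right ea.right_inv eb.left_inv)

theorem zpow_apply_of_map_add_one {R β : Type*} [AddGroupWithOne R] {f : R → β}
    {e : Equiv.Perm β} (hf : ∀ x, f (x + 1) = e (f x)) (n : ℤ) (x : R) :
    (e ^ n) (f x) = f (x + n) := by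
  have h : Semiconj f ⇑(Equiv.addRight (1 : R)) e := hf
  have := (h.perm_zpow n x).symm
  rwa [Equiv.zsmul_addRight, Equiv.coe_addRight, zsmul_one] at this

theorem Set.disjoint_image_add_const_Ioo {α : Type*} [AddCommGroup α] [LinearOrder α]
    [IsOrderedAddMonoid α] {a b t : α} (h : b - a ≤ |t|) :
    Disjoint ((· + t) '' Ioo a b) (Ioo a b) := by
  rw [image_add_const_Ioo]
  refine disjoint_left.2 fun z hz hz' => ?_
  rcases abs_cases t with ⟨ht, -⟩ | ⟨ht, -⟩ <;> rw [ht] at h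
  · exact (hz'.2.trans_le (sub_le_iff_le_add'.1 h)).trans hz.1 |>.false
  · have : b + t ≤ a := by rwa [sub_le_iff_le_add, ← sub_eq_neg_add, le_sub_iff_add_le] at h
    exact (hz.2.trans_le this).trans hz'.1 |>.false

/-- Classification of real projective structures on the circle: the developing
map `d : ℝ → R̃P¹ ≅ ℝ` of a projective structure on `ℝ/ℤ`, a local
homeomorphism equivariant under the holonomy `h = ρ(1)`, is a homeomorphism
onto its image `I` (an open interval), and `ρ(1)` is a nontrivial element
preserving `I` and acting freely and properly discontinuously on `I`; hence the
structure is the quotient `I / ⟨ρ(1)⟩`. -/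
theorem stmt9 (d : ℝ → ℝ) (hd : IsLocalHomeomorph d)
    (h : ℝ ≃ₜ ℝ) (hequiv : ∀ x : ℝ, d (x + 1) = h (d x)) :
    Function.Injective d ∧ IsOpenEmbedding d ∧ (Set.range d).OrdConnected ∧
    (∀ y ∈ Set.range d, h y ∈ Set.range d ∧ h.symm y ∈ Set.range d) ∧
    (∀ n : ℤ, n ≠ 0 → ∀ y ∈ Set.range d, (h.toEquiv ^ n) y ≠ y) ∧
    (∀ y ∈ Set.range d, ∃ U : Set ℝ, IsOpen U ∧ y ∈ U ∧ U ⊆ Set.range d ∧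
      ∀ n : ℤ, n ≠ 0 → Disjoint ((fun z => (h.toEquiv ^ n) z) '' U) U) := by
  have hinj : Injective d := hd.isOpenMap.injective_of_continuous hd.continuous
  have hzpow : ∀ (n : ℤ) (x : ℝ), (h.toEquiv ^ n) (d x) = d (x + n) :=
    zpow_apply_of_map_add_one hequiv
  refine ⟨hinj, hd.isOpenEmbedding_of_injective hinj,
    (isPreconnected_range hd.continuous).ordConnected, ?_, ?_, ?_⟩
  · rintro _ ⟨x, rfl⟩
    exact ⟨⟨x + 1, hequiv x⟩, ⟨x - 1, h.eq_symm_apply.2 (by rw [← hequiv, sub_add_cancel])⟩⟩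
  · rintro n hn _ ⟨x, rfl⟩ hfix
    rw [hzpow, hinj.eq_iff, add_eq_left] at hfix
    exact hn (Int.cast_eq_zero.1 hfix)
  · rintro _ ⟨x, rfl⟩
    refine ⟨d '' Ioo (x - 1 / 2) (x + 1 / 2), hd.isOpenMap _ isOpen_Ioo,
      mem_image_of_mem d ⟨by linarith, by linarith⟩, image_subset_range _ _, fun n hn => ?_⟩
    rw [image_image, show (fun y => (h.toEquiv ^ n) (d y)) = d ∘ (· + (n : ℝ)) from
      funext (hzpow n), image_comp, disjoint_image_iff hinj]
    refine disjoint_image_add_const_Ioo ?_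
    rw [← Int.cast_abs, show x + 1 / 2 - (x - 1 / 2) = ((1 : ℤ) : ℝ) by norm_num, Int.cast_le]
    exact Int.one_le_abs hn
end

section
/- Let u be a unit timelike Jacobi-type field along a timelike geodesic γ in a Lorentzian manifold of constant curvature −1, written as x'(t) = u₀ + u₁ cos t + u₂ sin t, v'(t) = −u₁ sin t + u₂ cos t with u₀, u₁, u₂ parallel along γ, u₀ tangent to γ and u₁, u₂ orthogonal to γ. Then the quantity ‖v'(t) + v × x'(t)‖² is independent of t, where v = γ'(t) and × is the Lorentzian cross product; explicitly it equals ‖−u₁ + v × u₂‖². -/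
/-! With `a = -u₁ + J u₂` one has `J a = -(u₂ + J u₁)`, so the field is
`v'(t) + J x'(t) = sin t • a - cos t • J a`. Since `J` is an isometry of `P` with `J² = -1`,
`J a` is orthogonal to `a` and has the same norm, and Pythagoras with `sin² + cos² = 1`
gives `‖a‖²` for every `t`. -/

open Real
open scoped InnerProductSpace

section ComplexStructure

variable {V : Type*} [NormedAddCommGroup V] [InnerProductSpace ℝ V]
  {J : V →ₗ[ℝ] V} {P : Submodule ℝ V} {a : V}

theorem norm_apply_eq_of_inner_apply_apply
    (hJinner : ∀ w ∈ P, ∀ w' ∈ P, ⟪J w, J w'⟫_ℝ = ⟪w, w'⟫_ℝ) (ha : a ∈ P) :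
    ‖J a‖ = ‖a‖ := by
  rw [norm_eq_sqrt_real_inner, norm_eq_sqrt_real_inner, hJinner a ha a ha]

theorem inner_self_apply_eq_zero_of_apply_apply_eq_neg (hJP : ∀ w ∈ P, J w ∈ P)
    (hJinner : ∀ w ∈ P, ∀ w' ∈ P, ⟪J w, J w'⟫_ℝ = ⟪w, w'⟫_ℝ)
    (hJ2 : ∀ w ∈ P, J (J w) = -w) (ha : a ∈ P) :
    ⟪a, J a⟫_ℝ = 0 := by
  have h := hJinner a ha (J a) (hJP a ha)
  rw [hJ2 a ha, inner_neg_right, real_inner_comm] at h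
  linarith

end ComplexStructure

theorem norm_sin_smul_sub_cos_smul_sq {V : Type*} [NormedAddCommGroup V]
    [InnerProductSpace ℝ V] {a b : V} (hab : ⟪a, b⟫_ℝ = 0) (hb : ‖b‖ = ‖a‖) (t : ℝ) :
    ‖sin t • a - cos t • b‖ ^ 2 = ‖a‖ ^ 2 := by
  rw [norm_sub_sq_real, real_inner_smul_left, real_inner_smul_right, hab, norm_smul,
    norm_smul, hb, norm_eq_abs, norm_eq_abs, mul_pow, mul_pow, sq_abs, sq_abs]
  linear_combination ‖a‖ ^ 2 * sin_sq_add_cos_sq t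

/-- Invariance of the left metric under the geodesic flow (Lemma 7.5),
algebraic form.  Along a timelike geodesic `γ` in a Lorentzian manifold of
constant curvature `-1`, a Jacobi field has the form
`x'(t) = u₀ + cos t • u₁ + sin t • u₂`, `v'(t) = -sin t • u₁ + cos t • u₂`
with `u₀, u₁, u₂` parallel, `u₀` tangent to `γ` and `u₁, u₂` orthogonal to
`γ`.  The operator `J = v × ·` (cross product with the unit tangent `v`)
kills `u₀` and restricts to the plane `P = v^⊥ ⊇ {u₁, u₂}` as an isometry with
`J² = -1`.  Then `‖v'(t) + v × x'(t)‖²` is independent of `t`, equal to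
`‖-u₁ + J u₂‖²`. -/
theorem stmt19 {V : Type*} [NormedAddCommGroup V] [InnerProductSpace ℝ V]
    (J : V →ₗ[ℝ] V) (P : Submodule ℝ V)
    (hJP : ∀ w ∈ P, J w ∈ P)
    (hJinner : ∀ w ∈ P, ∀ w' ∈ P, (inner ℝ (J w) (J w') : ℝ) = inner ℝ w w')
    (hJ2 : ∀ w ∈ P, J (J w) = -w)
    (u₀ u₁ u₂ : V) (hu₁ : u₁ ∈ P) (hu₂ : u₂ ∈ P) (hJu₀ : J u₀ = 0)
    (x' v' : ℝ → V)
    (hx' : ∀ t : ℝ, x' t = u₀ + Real.cos t • u₁ + Real.sin t • u₂)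
    (hv' : ∀ t : ℝ, v' t = -(Real.sin t • u₁) + Real.cos t • u₂) :
    ∀ t : ℝ, ‖v' t + J (x' t)‖ ^ 2 = ‖-u₁ + J u₂‖ ^ 2 := by
  intro t
  set a := -u₁ + J u₂ with ha
  have haP : a ∈ P := P.add_mem (P.neg_mem hu₁) (hJP _ hu₂)
  have hJa : J a = -(u₂ + J u₁) := by
    simp only [ha, map_add, map_neg, hJ2 u₂ hu₂]
    abel
  have hfield : v' t + J (x' t) = sin t • a - cos t • J a := by
    rw [hv', hx', hJa, ha]
    simp only [map_add, map_smul, hJu₀]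
    module
  rw [hfield]
  exact norm_sin_smul_sub_cos_smul_sq
    (inner_self_apply_eq_zero_of_apply_apply_eq_neg hJP hJinner hJ2 haP)
    (norm_apply_eq_of_inner_apply_apply hJinner haP) t
end
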